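/- arXiv:1703.10741 — 2 statements merged into one kernel-verified Lean document; each statement's English description precedes it below -/
import Mathlib

section
/- For r ≥ 4, let n ≥ 2(r-1) be even and let H be an (r-3)-regular bipartite graph with no 4-cycles on parts A and B of size n/2 each. The graph G consisting of H together with a clique on A and a clique on B satisfies δ(G) = n/2 + (r-4) and m(G, r) > r. -/
open Finset

open scoped Classical

noncomputable section

variable {V : Type*}

/-- Number of neighbours of `v` inside the set `A`. -/
def nbrsIn (G : SimpleGraph V) (A : Finset V) (v : V) : ℕ :=
  (A.filter (fun u => G.Adj v u)).card

/-- One step of the `r`-neighbour bootstrap process. -/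
def bootStep [Fintype V] (G : SimpleGraph V) (r : ℕ) (A : Finset V) : Finset V :=
  A ∪ Finset.univ.filter (fun v => r ≤ nbrsIn G A v)

/-- The sets `A_t` of the `r`-neighbour bootstrap process started at `A`. -/
def bootSeq [Fintype V] (G : SimpleGraph V) (r : ℕ) (A : Finset V) : ℕ → Finset V
  | 0 => A
  | t + 1 => bootStep G r (bootSeq G r A t)

/-- `A` is closed under the `r`-neighbour bootstrap rule. -/
def BootClosed (G : SimpleGraph V) (r : ℕ) (A : Finset V) : Prop :=
  ∀ v, r ≤ nbrsIn G A v → v ∈ A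

/-- The `r`-neighbour bootstrap closure `⟨A⟩_r`: the smallest closed superset of `A`. -/
def bootClosure [Fintype V] (G : SimpleGraph V) (r : ℕ) (A : Finset V) : Finset V :=
  Finset.univ.filter (fun v => ∀ B : Finset V, A ⊆ B → BootClosed G r B → v ∈ B)

/-- `m(G, r)`: the minimum size of a percolating set. -/
def minPerc [Fintype V] (G : SimpleGraph V) (r : ℕ) : ℕ :=
  sInf {k | ∃ A : Finset V, A.card = k ∧ bootClosure G r A = Finset.univ}

end

section Aux

variable {V : Type*}

lemma nbrsIn_mono (G : SimpleGraph V) {Y Z : Finset V} (h : Y ⊆ Z) (v : V) :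
    nbrsIn G Y v ≤ nbrsIn G Z v :=
  card_le_card (filter_subset_filter _ h)

lemma nbrsIn_le_card (G : SimpleGraph V) (Y : Finset V) (v : V) : nbrsIn G Y v ≤ Y.card :=
  card_filter_le _ _

lemma nbrsIn_union_le (G : SimpleGraph V) (Y Z : Finset V) (v : V) :
    nbrsIn G (Y ∪ Z) v ≤ nbrsIn G Y v + nbrsIn G Z v := by
  unfold nbrsIn
  rw [filter_union]
  exact card_union_le _ _

lemma nbrsIn_singleton_le (G : SimpleGraph V) (y : V) (v : V) :
    nbrsIn G {y} v ≤ 1 := by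
  simpa using nbrsIn_le_card G {y} v

lemma nbrsIn_singleton_not_adj (G : SimpleGraph V) {y v : V} (h : ¬ G.Adj v y) :
    nbrsIn G {y} v = 0 := by
  unfold nbrsIn
  rw [filter_singleton, if_neg h, card_empty]

lemma subset_bootClosure [Fintype V] (G : SimpleGraph V) (r : ℕ) (S : Finset V) :
    S ⊆ bootClosure G r S := fun v hv =>
  mem_filter.2 ⟨mem_univ _, fun _ hSB _ => hSB hv⟩

lemma bootClosure_subset_of_closed [Fintype V] {G : SimpleGraph V} {r : ℕ} {S C : Finset V}
    (hSC : S ⊆ C) (hC : BootClosed G r C) : bootClosure G r S ⊆ C := fun v hv =>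
  (mem_filter.1 hv).2 C hSC hC

lemma bootClosure_univ [Fintype V] (G : SimpleGraph V) (r : ℕ) :
    bootClosure G r (Finset.univ) = Finset.univ :=
  univ_subset_iff.1 (subset_bootClosure G r _)

/-- If one side contains at most 2 vertices of `S`, then `S` together with the other side is
closed, so `S` does not percolate. -/
lemma small_side [Fintype V] (G : SimpleGraph V) (r : ℕ) (A B S : Finset V)
    (hregA : ∀ a ∈ A, nbrsIn G B a = r - 3)
    (hpart : A ∪ B = Finset.univ) (hdisj : Disjoint A B)
    (hr : 4 ≤ r)
    (hSA : (S ∩ A).card ≤ 2) (hAbig : 3 ≤ A.card) :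
    ∃ C : Finset V, S ⊆ C ∧ BootClosed G r C ∧ C ≠ Finset.univ := by
  refine ⟨B ∪ S, subset_union_right, ?_, ?_⟩
  · intro x hx
    by_contra hxC
    have hxB : x ∉ B := fun h => hxC (mem_union_left _ h)
    have hxS : x ∉ S := fun h => hxC (mem_union_right _ h)
    have hxA : x ∈ A := by
      have := mem_univ (α := V) x
      rw [← hpart, mem_union] at this
      tauto
    have hsub : B ∪ S ⊆ B ∪ (S ∩ A) := by
      intro u hu
      rcases mem_union.1 hu with h | h
      · exact mem_union_left _ h
      · rcases mem_union.1 (hpart ▸ mem_univ u) with h' | h'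
        · exact mem_union_right _ (mem_inter.2 ⟨h, h'⟩)
        · exact mem_union_left _ h'
    have h1 : nbrsIn G (B ∪ S) x ≤ nbrsIn G B x + nbrsIn G (S ∩ A) x :=
      (nbrsIn_mono G hsub x).trans (nbrsIn_union_le G _ _ x)
    have h2 : nbrsIn G B x = r - 3 := hregA x hxA
    have h3 : nbrsIn G (S ∩ A) x ≤ 2 := (nbrsIn_le_card G _ x).trans hSA
    omega
  · intro h
    have : ¬ A ⊆ S ∩ A := fun hsub => by
      have := card_le_card hsub
      omega
    obtain ⟨x, hxA, hxSA⟩ := not_subset.1 this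
    have hxS : x ∉ S := fun h => hxSA (mem_inter.2 ⟨h, hxA⟩)
    have hxB : x ∉ B := fun h' => (hdisj.forall_ne_finset hxA h') rfl
    have : x ∈ B ∪ S := h ▸ mem_univ x
    rcases mem_union.1 this with h' | h' <;> tauto

/-- The main one-sided lemma: `a, b ≥ 3`, `a + b = r`, and there is a potential first
infection `v1` on the `A`-side.  Then the closure of `S` has size at most `|S| + 2`. -/
lemma side_lemma [Fintype V] (G : SimpleGraph V) (r : ℕ) (A B S : Finset V)
    (hC4A : ∀ a ∈ A, ∀ a' ∈ A, a ≠ a' →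
      (B.filter (fun b => G.Adj a b ∧ G.Adj a' b)).card ≤ 1)
    (hC4B : ∀ b ∈ B, ∀ b' ∈ B, b ≠ b' →
      (A.filter (fun a => G.Adj b a ∧ G.Adj b' a)).card ≤ 1)
    (hregA : ∀ a ∈ A, nbrsIn G B a = r - 3)
    (hregB : ∀ b ∈ B, nbrsIn G A b = r - 3)
    (hpart : A ∪ B = Finset.univ) (hdisj : Disjoint A B)
    (hSA : 3 ≤ (S ∩ A).card) (hSB : 3 ≤ (S ∩ B).card)
    (hab : (S ∩ A).card + (S ∩ B).card = r)
    (v1 : V) (hv1A : v1 ∈ A) (hv1S : v1 ∉ S)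
    (hv1 : S ∩ B ⊆ B.filter (fun u => G.Adj v1 u)) :
    ∃ C : Finset V, S ⊆ C ∧ BootClosed G r C ∧ C.card ≤ S.card + 2 := by
  set a := (S ∩ A).card with ha_def
  set b := (S ∩ B).card with hb_def
  set X : Finset V := insert v1 (S ∩ A) with hX_def
  have hXA : X ⊆ A := by
    intro u hu
    rcases mem_insert.1 hu with h | h
    · exact h ▸ hv1A
    · exact (mem_inter.1 h).2
  have hXcard : X.card = a + 1 := by
    rw [hX_def, card_insert_of_notMem (fun h => hv1S (mem_inter.1 h).1)]
  have hSsplit : ∀ u ∈ S, u ∈ (S ∩ A) ∪ (S ∩ B) := by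
    intro u hu
    rcases mem_union.1 (hpart ▸ mem_univ u) with h | h
    · exact mem_union_left _ (mem_inter.2 ⟨hu, h⟩)
    · exact mem_union_right _ (mem_inter.2 ⟨hu, h⟩)
  have hE : ∀ x ∈ A, x ≠ v1 → nbrsIn G (S ∩ B) x ≤ 1 := by
    intro x hxA hxv1
    have hsub : (S ∩ B).filter (fun u => G.Adj x u) ⊆
        B.filter (fun u => G.Adj x u ∧ G.Adj v1 u) := by
      intro u hu
      have hu1 := (mem_filter.1 hu).1
      have hu2 := (mem_filter.1 hu).2
      exact mem_filter.2 ⟨(mem_inter.1 hu1).2, hu2, (mem_filter.1 (hv1 hu1)).2⟩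
    exact (card_le_card hsub).trans (hC4A x hxA v1 hv1A hxv1)
  by_cases hw : ∃ w, w ∈ B ∧ w ∉ S ∧ a ≤ nbrsIn G X w
  · -- second-level vertex w1 exists: C = {w1, v1} ∪ S
    obtain ⟨w1, hw1B, hw1S, hw1X⟩ := hw
    have hv1w1 : v1 ≠ w1 := fun h => hdisj.forall_ne_finset hv1A hw1B h
    refine ⟨insert w1 (insert v1 S), (subset_insert v1 S).trans (subset_insert w1 _), ?_, ?_⟩
    swap
    · calc (insert w1 (insert v1 S)).card ≤ (insert v1 S).card + 1 := card_insert_le _ _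
        _ ≤ S.card + 1 + 1 := by have := card_insert_le v1 S; omega
        _ = S.card + 2 := by omega
    intro x hx
    by_contra hxC
    have hxw1 : x ≠ w1 := fun h => hxC (h ▸ mem_insert_self _ _)
    have hxv1 : x ≠ v1 := fun h => hxC (mem_insert_of_mem (h ▸ mem_insert_self _ _))
    have hxS : x ∉ S := fun h => hxC (mem_insert_of_mem (mem_insert_of_mem h))
    have hCsub : (insert w1 (insert v1 S) : Finset V) ⊆ ((S ∩ B) ∪ X) ∪ {w1} := by
      intro u hu
      rcases mem_insert.1 hu with h | h
      · exact mem_union_right _ (h ▸ mem_singleton_self _)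
      · rcases mem_insert.1 h with h' | h'
        · exact mem_union_left _ (mem_union_right _ (h' ▸ mem_insert_self _ _))
        · rcases mem_union.1 (hSsplit u h') with h'' | h''
          · exact mem_union_left _ (mem_union_right _ (mem_insert_of_mem h''))
          · exact mem_union_left _ (mem_union_left _ h'')
    have hbound : nbrsIn G (insert w1 (insert v1 S)) x ≤
        nbrsIn G (S ∩ B) x + nbrsIn G X x + nbrsIn G {w1} x := by
      calc nbrsIn G (insert w1 (insert v1 S)) x ≤ nbrsIn G (((S ∩ B) ∪ X) ∪ {w1}) x :=
            nbrsIn_mono G hCsub x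
        _ ≤ nbrsIn G ((S ∩ B) ∪ X) x + nbrsIn G {w1} x := nbrsIn_union_le G _ _ x
        _ ≤ nbrsIn G (S ∩ B) x + nbrsIn G X x + nbrsIn G {w1} x := by
            have := nbrsIn_union_le G (S ∩ B) X x; omega
    rcases mem_union.1 (hpart ▸ mem_univ x) with hxA | hxB
    · -- x ∈ A
      have h1 : nbrsIn G (S ∩ B) x ≤ 1 := hE x hxA hxv1
      have h2 : nbrsIn G X x ≤ a + 1 := hXcard ▸ nbrsIn_le_card G X x
      by_cases hb4 : 4 ≤ b
      · have h3 : nbrsIn G {w1} x ≤ 1 := nbrsIn_singleton_le G w1 x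
        omega
      · -- b = 3, so a = r - 3 and N(w1) ∩ A ⊆ X, hence x is not adjacent to w1
        have hb3 : b = 3 := by omega
        have hwdeg : nbrsIn G A w1 = r - 3 := hregB w1 hw1B
        have haval : a = r - 3 := by omega
        have hXw1 : X.filter (fun u => G.Adj w1 u) = A.filter (fun u => G.Adj w1 u) := by
          apply eq_of_subset_of_card_le (filter_subset_filter _ hXA)
          show nbrsIn G A w1 ≤ nbrsIn G X w1
          omega
        have hnadj : ¬ G.Adj x w1 := by
          intro hadj
          have : x ∈ A.filter (fun u => G.Adj w1 u) := mem_filter.2 ⟨hxA, hadj.symm⟩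
          rw [← hXw1] at this
          have := filter_subset _ _ this
          rcases mem_insert.1 this with h | h
          · exact hxv1 h
          · exact hxS (mem_inter.1 h).1
        have h3 : nbrsIn G {w1} x = 0 := nbrsIn_singleton_not_adj G hnadj
        omega
    · -- x ∈ B
      have h1 : nbrsIn G (S ∩ B) x ≤ b := nbrsIn_le_card G _ x
      have h3 : nbrsIn G {w1} x ≤ 1 := nbrsIn_singleton_le G w1 x
      have hinter : ∀ w ∈ B, w ≠ w1 →
          ((X.filter (fun u => G.Adj w u)) ∩ (X.filter (fun u => G.Adj w1 u))).card ≤ 1 := by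
        intro w hwB hne
        refine (card_le_card ?_).trans (hC4B w hwB w1 hw1B hne)
        intro u hu
        have hu1 := mem_inter.1 hu
        exact mem_filter.2 ⟨hXA (filter_subset _ _ hu1.1),
          (mem_filter.1 hu1.1).2, (mem_filter.1 hu1.2).2⟩
      by_cases ha4 : 4 ≤ a
      · -- a ≥ 4 : x has at most 2 neighbours in X
        have hscard : a ≤ (X.filter (fun u => G.Adj w1 u)).card := hw1X
        have htsub : X.filter (fun u => G.Adj w1 u) ⊆ X := filter_subset _ _
        have hssub : X.filter (fun u => G.Adj x u) ⊆
            ((X.filter (fun u => G.Adj x u)) ∩ (X.filter (fun u => G.Adj w1 u))) ∪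
              (X \ X.filter (fun u => G.Adj w1 u)) := by
          intro u hu
          by_cases h : u ∈ X.filter (fun u => G.Adj w1 u)
          · exact mem_union_left _ (mem_inter.2 ⟨hu, h⟩)
          · exact mem_union_right _ (mem_sdiff.2 ⟨filter_subset _ _ hu, h⟩)
        have h2 : nbrsIn G X x ≤ 2 := by
          have hc1 := hinter x hxB hxw1
          have hc2 : (X \ X.filter (fun u => G.Adj w1 u)).card =
              X.card - (X.filter (fun u => G.Adj w1 u)).card := card_sdiff_of_subset htsub
          have hc3 := card_le_card htsub
          have := (card_le_card hssub).trans (card_union_le _ _)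
          show nbrsIn G X x ≤ 2
          unfold nbrsIn
          omega
        omega
      · -- a = 3, so b = r - 3 and N(v1) ∩ B = S ∩ B
        have ha3 : a = 3 := by omega
        have hv1deg : nbrsIn G B v1 = r - 3 := hregA v1 hv1A
        have hbval : b = r - 3 := by omega
        have hfe : S ∩ B = B.filter (fun u => G.Adj v1 u) := by
          apply eq_of_subset_of_card_le hv1
          show nbrsIn G B v1 ≤ b
          omega
        have hxv1adj : ¬ G.Adj v1 x := by
          intro h
          exact hxS (mem_inter.1 (hfe ▸ (mem_filter.2 ⟨hxB, h⟩ : x ∈ B.filter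
            (fun u => G.Adj v1 u)))).1
        have hw1v1adj : ¬ G.Adj v1 w1 := by
          intro h
          exact hw1S (mem_inter.1 (hfe ▸ (mem_filter.2 ⟨hw1B, h⟩ : w1 ∈ B.filter
            (fun u => G.Adj v1 u)))).1
        have hXw1filter : X.filter (fun u => G.Adj w1 u) = (S ∩ A).filter (fun u => G.Adj w1 u) := by
          rw [hX_def, filter_insert, if_neg (fun h => hw1v1adj h.symm)]
        have hSAsub : (S ∩ A).filter (fun u => G.Adj w1 u) = S ∩ A := by
          apply eq_of_subset_of_card_le (filter_subset _ _)
          have : a ≤ ((S ∩ A).filter (fun u => G.Adj w1 u)).card := by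
            have := hw1X
            unfold nbrsIn at this
            rw [hXw1filter] at this
            exact this
          omega
        have hSAadj : ∀ u ∈ S ∩ A, G.Adj w1 u := by
          intro u hu
          have h : u ∈ (S ∩ A).filter (fun u => G.Adj w1 u) := by rw [hSAsub]; exact hu
          exact (mem_filter.1 h).2
        have hXxfilter : X.filter (fun u => G.Adj x u) = (S ∩ A).filter (fun u => G.Adj x u) := by
          rw [hX_def, filter_insert, if_neg (fun h => hxv1adj h.symm)]
        have h2 : nbrsIn G X x ≤ 1 := by
          show (X.filter (fun u => G.Adj x u)).card ≤ 1
          rw [hXxfilter]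
          refine (card_le_card ?_).trans (hC4B x hxB w1 hw1B hxw1)
          intro u hu
          have hu1 := mem_filter.1 hu
          exact mem_filter.2 ⟨(mem_inter.1 hu1.1).2, hu1.2, hSAadj u hu1.1⟩
        omega
  · -- no second-level vertex: C = insert v1 S
    push_neg at hw
    refine ⟨insert v1 S, subset_insert _ _, ?_, by
      calc (insert v1 S).card ≤ S.card + 1 := card_insert_le _ _
        _ ≤ S.card + 2 := by omega⟩
    intro x hx
    by_contra hxC
    have hxv1 : x ≠ v1 := fun h => hxC (h ▸ mem_insert_self _ _)
    have hxS : x ∉ S := fun h => hxC (mem_insert_of_mem h)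
    have hCsub : (insert v1 S : Finset V) ⊆ ((S ∩ B) ∪ X) := by
      intro u hu
      rcases mem_insert.1 hu with h | h
      · exact mem_union_right _ (h ▸ mem_insert_self _ _)
      · rcases mem_union.1 (hSsplit u h) with h' | h'
        · exact mem_union_right _ (mem_insert_of_mem h')
        · exact mem_union_left _ h'
    have hbound : nbrsIn G (insert v1 S) x ≤ nbrsIn G (S ∩ B) x + nbrsIn G X x :=
      (nbrsIn_mono G hCsub x).trans (nbrsIn_union_le G _ _ x)
    rcases mem_union.1 (hpart ▸ mem_univ x) with hxA | hxB
    · have h1 : nbrsIn G (S ∩ B) x ≤ 1 := hE x hxA hxv1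
      have h2 : nbrsIn G X x ≤ a + 1 := hXcard ▸ nbrsIn_le_card G X x
      omega
    · have h1 : nbrsIn G (S ∩ B) x ≤ b := nbrsIn_le_card G _ x
      have h2 : nbrsIn G X x < a := hw x hxB hxS
      omega

/-- No set of size at most `r` percolates. -/
lemma no_small_perc [Fintype V] (G : SimpleGraph V) (r n : ℕ)
    (hr : 4 ≤ r) (hn : Fintype.card V = n) (he : Even n) (hbig : 2 * (r - 1) ≤ n)
    (A B : Finset V) (hpart : A ∪ B = Finset.univ) (hdisj : Disjoint A B)
    (hAcard : A.card = n / 2) (hBcard : B.card = n / 2)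
    (hregA : ∀ a ∈ A, nbrsIn G B a = r - 3)
    (hregB : ∀ b ∈ B, nbrsIn G A b = r - 3)
    (hC4A : ∀ a ∈ A, ∀ a' ∈ A, a ≠ a' →
      (B.filter (fun b => G.Adj a b ∧ G.Adj a' b)).card ≤ 1)
    (hC4B : ∀ b ∈ B, ∀ b' ∈ B, b ≠ b' →
      (A.filter (fun a => G.Adj b a ∧ G.Adj b' a)).card ≤ 1)
    (S : Finset V) (hS : S.card ≤ r) :
    ∃ C : Finset V, S ⊆ C ∧ BootClosed G r C ∧ C ≠ Finset.univ := by
  have hhalf : r - 1 ≤ n / 2 := by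
    obtain ⟨k, hk⟩ := he
    omega
  have hA3 : 3 ≤ A.card := by omega
  have hB3 : 3 ≤ B.card := by omega
  have hpart' : B ∪ A = Finset.univ := by rw [union_comm]; exact hpart
  have hSeq : (S ∩ A) ∪ (S ∩ B) = S := by
    rw [← inter_union_distrib_left, hpart, inter_univ]
  have hsum : (S ∩ A).card + (S ∩ B).card = S.card := by
    have h := card_union_of_disjoint (hdisj.mono inter_subset_right inter_subset_right
      : Disjoint (S ∩ A) (S ∩ B))
    rw [hSeq] at h
    omega
  have hSsplit : ∀ u ∈ S, u ∈ (S ∩ A) ∪ (S ∩ B) := fun u hu => by rw [hSeq]; exact hu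
  have hnuniv : (Finset.univ : Finset V).card = n := by rw [card_univ, hn]
  by_cases hA2 : (S ∩ A).card ≤ 2
  · exact small_side G r A B S hregA hpart hdisj hr hA2 hA3
  by_cases hB2 : (S ∩ B).card ≤ 2
  · exact small_side G r B A S hregB hpart' hdisj.symm hr hB2 hB3
  push_neg at hA2 hB2
  by_cases habr : (S ∩ A).card + (S ∩ B).card = r
  · -- main case: a, b ≥ 3, a + b = r
    by_cases h1 : ∃ v, v ∈ A ∧ v ∉ S ∧ S ∩ B ⊆ B.filter (fun u => G.Adj v u)
    · obtain ⟨v1, hv1A, hv1S, hv1⟩ := h1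
      obtain ⟨C, hSC, hCcl, hCcard⟩ := side_lemma G r A B S hC4A hC4B hregA hregB hpart hdisj
        (by omega) (by omega) habr v1 hv1A hv1S hv1
      refine ⟨C, hSC, hCcl, fun h => ?_⟩
      rw [h, hnuniv] at hCcard
      omega
    by_cases h2 : ∃ w, w ∈ B ∧ w ∉ S ∧ S ∩ A ⊆ A.filter (fun u => G.Adj w u)
    · obtain ⟨w1, hw1B, hw1S, hw1⟩ := h2
      obtain ⟨C, hSC, hCcl, hCcard⟩ := side_lemma G r B A S hC4B hC4A hregB hregA hpart'
        hdisj.symm (by omega) (by omega) (by omega) w1 hw1B hw1S hw1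
      refine ⟨C, hSC, hCcl, fun h => ?_⟩
      rw [h, hnuniv] at hCcard
      omega
    · -- no first infection at all: S itself is closed
      push_neg at h1 h2
      refine ⟨S, Finset.Subset.refl S, ?_, fun h => by rw [h, hnuniv] at hS; omega⟩
      intro x hx
      by_contra hxS
      have hbound : nbrsIn G S x ≤ nbrsIn G (S ∩ A) x + nbrsIn G (S ∩ B) x :=
        (nbrsIn_mono G (fun u hu => hSsplit u hu) x).trans (nbrsIn_union_le G _ _ x)
      rcases mem_union.1 (hpart ▸ mem_univ x) with hxA | hxB
      · have hlt : nbrsIn G (S ∩ B) x < (S ∩ B).card := by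
          rcases lt_or_eq_of_le (nbrsIn_le_card G (S ∩ B) x) with h | h
          · exact h
          · exfalso
            have heqf : (S ∩ B).filter (fun u => G.Adj x u) = S ∩ B :=
              eq_of_subset_of_card_le (filter_subset _ _) (le_of_eq h.symm)
            refine h1 x hxA hxS ?_
            intro u hu
            have : u ∈ (S ∩ B).filter (fun u => G.Adj x u) := by rw [heqf]; exact hu
            exact mem_filter.2 ⟨(mem_inter.1 hu).2, (mem_filter.1 this).2⟩
        have : nbrsIn G (S ∩ A) x ≤ (S ∩ A).card := nbrsIn_le_card G _ x
        omega
      · have hlt : nbrsIn G (S ∩ A) x < (S ∩ A).card := by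
          rcases lt_or_eq_of_le (nbrsIn_le_card G (S ∩ A) x) with h | h
          · exact h
          · exfalso
            have heqf : (S ∩ A).filter (fun u => G.Adj x u) = S ∩ A :=
              eq_of_subset_of_card_le (filter_subset _ _) (le_of_eq h.symm)
            refine h2 x hxB hxS ?_
            intro u hu
            have : u ∈ (S ∩ A).filter (fun u => G.Adj x u) := by rw [heqf]; exact hu
            exact mem_filter.2 ⟨(mem_inter.1 hu).2, (mem_filter.1 this).2⟩
        have : nbrsIn G (S ∩ B) x ≤ (S ∩ B).card := nbrsIn_le_card G _ x
        omega
  · -- |S| < r : S itself is closed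
    refine ⟨S, Finset.Subset.refl S, ?_, fun h => by rw [h, hnuniv] at hS; omega⟩
    intro x hx
    by_contra hxS
    have hbound : nbrsIn G S x ≤ nbrsIn G (S ∩ A) x + nbrsIn G (S ∩ B) x :=
      (nbrsIn_mono G (fun u hu => hSsplit u hu) x).trans (nbrsIn_union_le G _ _ x)
    have h1 : nbrsIn G (S ∩ A) x ≤ (S ∩ A).card := nbrsIn_le_card G _ x
    have h2 : nbrsIn G (S ∩ B) x ≤ (S ∩ B).card := nbrsIn_le_card G _ x
    omega

lemma degree_eq [Fintype V] (G : SimpleGraph V) (r n : ℕ) (hr : 4 ≤ r)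
    (A B : Finset V) (hdisj : Disjoint A B)
    (hAcard : A.card = n / 2) (h3 : 3 ≤ n / 2)
    (hclique : ∀ a ∈ A, ∀ a' ∈ A, a ≠ a' → G.Adj a a')
    (hreg : ∀ a ∈ A, nbrsIn G B a = r - 3)
    (hpart : A ∪ B = Finset.univ)
    (v : V) (hv : v ∈ A) : G.degree v = n / 2 + (r - 4) := by
  have hnf : G.neighborFinset v = Finset.univ.filter (fun u => G.Adj v u) := by
    ext u
    simp [SimpleGraph.mem_neighborFinset]
  have hdeg : G.degree v = nbrsIn G (A ∪ B) v := by
    rw [← SimpleGraph.card_neighborFinset_eq_degree, hnf, hpart]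
    rfl
  have hAB : nbrsIn G (A ∪ B) v = nbrsIn G A v + nbrsIn G B v := by
    unfold nbrsIn
    rw [filter_union]
    exact card_union_of_disjoint (hdisj.mono (filter_subset _ _) (filter_subset _ _))
  have hAeq : A.filter (fun u => G.Adj v u) = A.erase v := by
    ext u
    simp only [mem_filter, mem_erase]
    constructor
    · rintro ⟨huA, hadj⟩
      exact ⟨(hadj.ne).symm, huA⟩
    · rintro ⟨hne, huA⟩
      exact ⟨huA, hclique v hv u huA hne.symm⟩
  have hAcount : nbrsIn G A v = n / 2 - 1 := by
    show (A.filter (fun u => G.Adj v u)).card = n / 2 - 1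
    rw [hAeq, card_erase_of_mem hv, hAcard]
  have hBcount : nbrsIn G B v = r - 3 := hreg v hv
  omega


end Aux

theorem stmt_9 {V : Type*} [Fintype V] (G : SimpleGraph V) (r n : ℕ)
    (hr : 4 ≤ r) (hn : Fintype.card V = n) (he : Even n) (hbig : 2 * (r - 1) ≤ n)
    (A B : Finset V) (hpart : A ∪ B = Finset.univ) (hdisj : Disjoint A B)
    (hAcard : A.card = n / 2) (hBcard : B.card = n / 2)
    (hcliqueA : ∀ a ∈ A, ∀ a' ∈ A, a ≠ a' → G.Adj a a')
    (hcliqueB : ∀ b ∈ B, ∀ b' ∈ B, b ≠ b' → G.Adj b b')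
    (hregA : ∀ a ∈ A, nbrsIn G B a = r - 3)
    (hregB : ∀ b ∈ B, nbrsIn G A b = r - 3)
    (hC4A : ∀ a ∈ A, ∀ a' ∈ A, a ≠ a' →
      (B.filter (fun b => G.Adj a b ∧ G.Adj a' b)).card ≤ 1)
    (hC4B : ∀ b ∈ B, ∀ b' ∈ B, b ≠ b' →
      (A.filter (fun a => G.Adj b a ∧ G.Adj b' a)).card ≤ 1) :
    G.minDegree = n / 2 + (r - 4) ∧ r < minPerc G r := by
  have hhalf : r - 1 ≤ n / 2 := by
    obtain ⟨k, hk⟩ := he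
    omega
  have hnon : Nonempty V := by
    rw [← Fintype.card_pos_iff, hn]
    omega
  constructor
  · obtain ⟨v, hv⟩ := G.exists_minimal_degree_vertex
    rw [hv]
    rcases mem_union.1 (hpart ▸ mem_univ v) with hvA | hvB
    · exact degree_eq G r n hr A B hdisj hAcard (by omega) hcliqueA hregA hpart v hvA
    · exact degree_eq G r n hr B A hdisj.symm hBcard (by omega) hcliqueB hregB
        (by rw [union_comm]; exact hpart) v hvB
  · by_contra hcon
    push_neg at hcon
    have hPne : {k | ∃ A : Finset V, A.card = k ∧ bootClosure G r A = Finset.univ}.Nonempty :=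
      ⟨Fintype.card V, Finset.univ, card_univ, bootClosure_univ G r⟩
    obtain ⟨S, hScard, hSclos⟩ := Nat.sInf_mem hPne
    have hSle : S.card ≤ r := by
      rw [hScard]
      exact hcon
    obtain ⟨C, hSC, hCcl, hCne⟩ := no_small_perc G r n hr hn he hbig A B hpart hdisj hAcard
      hBcard hregA hregB hC4A hC4B S hSle
    have hsub := bootClosure_subset_of_closed hSC hCcl
    rw [hSclos] at hsub
    exact hCne (univ_subset_iff.1 hsub)
end

section
/- Let n ≥ 13 be odd and let G be a graph on n vertices with δ(G) ≥ (n+1)/2. If there exists A ⊆ V(G) with |A| = (n+1)/2 and ⟨A⟩_3 = A, then m(G, 3) = 3. -/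
open Finset

open scoped Classical

/-!
Let `B = Aᶜ`, so `|B| = (n - 1) / 2` and every degree exceeds `|B|`. Closedness of `A` caps the
neighbours of each `b ∈ B` inside `A` at two, which together with the degree bound forces `B` to
be a clique and each `b ∈ B` to have exactly two neighbours in `A`. Double counting the `A`–`B`
edges gives `a₂ ∈ A` with two neighbours in `B`; it has a neighbour `a₁ ∈ A`, which in turn has a
neighbour `b₃ ∈ B`. Seeding with `a₁` and two further vertices of `B` infects `b₃`, then the
clique `B`, then `a₂`. The uninfected vertices now number fewer than `|B|`, too few to keep any of
them below threshold. Conversely, any set of fewer than three vertices is closed.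
-/

section

variable {G : SimpleGraph V} {r : ℕ} {A B C K s : Finset V} {v : V}

lemma nbrsIn_mono_s11 (h : A ⊆ B) : nbrsIn G A v ≤ nbrsIn G B v :=
  card_le_card (filter_subset_filter _ h)

lemma le_nbrsIn_of_subset (hs : s ⊆ A) (hadj : ∀ u ∈ s, G.Adj v u) : s.card ≤ nbrsIn G A v :=
  card_le_card fun u hu => mem_filter.2 ⟨hs hu, hadj u hu⟩

lemma filter_adj_subset_erase : A.filter (fun u => G.Adj v u) ⊆ A.erase v := fun _ hu =>
  mem_erase.2 ⟨fun h => G.irrefl (h ▸ (mem_filter.1 hu).2), (mem_filter.1 hu).1⟩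

lemma nbrsIn_le_card_erase : nbrsIn G A v ≤ (A.erase v).card :=
  card_le_card filter_adj_subset_erase

lemma sum_nbrsIn_comm (A B : Finset V) :
    ∑ a ∈ A, nbrsIn G B a = ∑ b ∈ B, nbrsIn G A b := by
  simp only [nbrsIn, card_filter]
  rw [sum_comm]
  exact sum_congr rfl fun _ _ => sum_congr rfl fun _ _ => if_congr (G.adj_comm _ _) rfl rfl

lemma bootClosed_of_card_lt (h : A.card < r) : BootClosed G r A := fun _ hv =>
  absurd (hv.trans (card_filter_le _ _)) (not_le.2 h)

namespace BootClosed

lemma nbrsIn_lt (hA : BootClosed G r A) (hv : v ∉ A) : nbrsIn G A v < r :=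
  lt_of_not_ge fun h => hv (hA v h)

lemma mem_of_le_card (hC : BootClosed G r C) (hs : s ⊆ C) (hadj : ∀ u ∈ s, G.Adj v u)
    (hr : r ≤ s.card) : v ∈ C :=
  hC v (hr.trans (le_nbrsIn_of_subset hs hadj))

lemma subset_of_isClique (hC : BootClosed G r C) (hK : G.IsClique (K : Set V))
    (hr : r ≤ (K ∩ C).card) : K ⊆ C := by
  intro v hv
  by_contra hvC
  refine hvC (hC.mem_of_le_card inter_subset_right (fun u hu => ?_) hr)
  exact hK hv (mem_inter.1 hu).1 (fun h => hvC (h ▸ (mem_inter.1 hu).2))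

lemma subset_of_isClique_of_adj (hC : BootClosed G r C) (hK : G.IsClique (K : Set V))
    {b : V} (hb : b ∈ K) (hv : v ∈ C) (hvK : v ∉ K) (hbv : G.Adj b v)
    (hr : r ≤ ((K ∩ C).erase b).card + 1) : K ⊆ C := by
  have hvs : v ∉ (K ∩ C).erase b := fun h => hvK (mem_inter.1 (mem_of_mem_erase h)).1
  have hbC : b ∈ C := by
    refine hC.mem_of_le_card (s := insert v ((K ∩ C).erase b))
      (insert_subset hv ((erase_subset _ _).trans inter_subset_right)) ?_
      (by rwa [card_insert_of_notMem hvs])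
    intro u hu
    rcases mem_insert.1 hu with rfl | hu
    · exact hbv
    · exact hK hb (mem_inter.1 (mem_of_mem_erase hu)).1 (ne_of_mem_erase hu).symm
  refine hC.subset_of_isClique hK (hr.trans_eq ?_)
  exact card_erase_add_one (mem_inter.2 ⟨hb, hbC⟩)

end BootClosed

end

section

variable [Fintype V] {G : SimpleGraph V} {r : ℕ} {A C : Finset V} {v : V}

lemma mem_bootClosure :
    v ∈ bootClosure G r A ↔ ∀ B : Finset V, A ⊆ B → BootClosed G r B → v ∈ B := by
  simp [bootClosure]

lemma subset_bootClosure_s11 : A ⊆ bootClosure G r A := fun _ hv =>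
  mem_bootClosure.2 fun _ hAB _ => hAB hv

lemma bootClosure_subset {B : Finset V} (hAB : A ⊆ B) (hB : BootClosed G r B) :
    bootClosure G r A ⊆ B := fun _ hv => mem_bootClosure.1 hv B hAB hB

lemma bootClosed_bootClosure : BootClosed G r (bootClosure G r A) := fun v hv =>
  mem_bootClosure.2 fun B hAB hB =>
    hB v (hv.trans (nbrsIn_mono_s11 fun _ hx => mem_bootClosure.1 hx B hAB hB))

lemma bootClosed_iff_bootClosure_eq : BootClosed G r A ↔ bootClosure G r A = A :=
  ⟨fun h => (bootClosure_subset Subset.rfl h).antisymm subset_bootClosure_s11,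
    fun h => h ▸ bootClosed_bootClosure⟩

lemma minPerc_le_card (h : bootClosure G r A = univ) : minPerc G r ≤ A.card :=
  Nat.sInf_le ⟨A, rfl, h⟩

lemma le_minPerc (h : r ≤ Fintype.card V) : r ≤ minPerc G r := by
  refine le_csInf ⟨_, univ, rfl, univ_subset_iff.1 subset_bootClosure_s11⟩ ?_
  rintro k ⟨T, rfl, hT⟩
  by_contra! hlt
  have hT' : T = univ := (bootClosed_iff_bootClosure_eq.1 (bootClosed_of_card_lt hlt)).symm.trans hT
  rw [hT', card_univ] at hlt
  omega

lemma nbrsIn_add_nbrsIn_compl : nbrsIn G A v + nbrsIn G Aᶜ v = G.degree v := by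
  rw [← G.card_neighborFinset_eq_degree, G.neighborFinset_eq_filter, nbrsIn, nbrsIn,
    ← card_union_of_disjoint (disjoint_filter_filter disjoint_compl_right), ← filter_union,
    union_compl]

lemma degree_lt_nbrsIn_add_card_compl (hv : v ∉ A) : G.degree v < nbrsIn G A v + Aᶜ.card := by
  have := nbrsIn_le_card_erase (G := G) (A := Aᶜ) (v := v)
  rw [card_erase_of_mem (mem_compl.2 hv)] at this
  have : 0 < Aᶜ.card := card_pos.2 ⟨v, mem_compl.2 hv⟩
  have := nbrsIn_add_nbrsIn_compl (G := G) (A := A) (v := v)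
  omega

lemma exists_adj_mem (h : (Aᶜ.erase v).card < G.degree v) : ∃ u ∈ A, G.Adj v u := by
  have hpos : 0 < nbrsIn G A v := by
    have := nbrsIn_le_card_erase (G := G) (A := Aᶜ) (v := v)
    have := nbrsIn_add_nbrsIn_compl (G := G) (A := A) (v := v)
    omega
  obtain ⟨u, hu⟩ := card_pos.1 hpos
  exact ⟨u, (mem_filter.1 hu).1, (mem_filter.1 hu).2⟩

lemma le_nbrsIn_add_one (h : Aᶜ.card + r ≤ G.minDegree + 2) (hv : v ∉ A) :
    r ≤ nbrsIn G A v + 1 := by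
  have := degree_lt_nbrsIn_add_card_compl (G := G) hv
  have := G.minDegree_le_degree v
  omega

namespace BootClosed

lemma eq_univ_of_card_compl (hC : BootClosed G r C) (h : Cᶜ.card + r ≤ G.minDegree + 1) :
    C = univ := by
  refine eq_univ_of_forall fun v => by_contra fun hv => ?_
  have := hC.nbrsIn_lt hv
  have := degree_lt_nbrsIn_add_card_compl (G := G) hv
  have := G.minDegree_le_degree v
  omega

lemma isClique_compl (hA : BootClosed G r A) (h : Aᶜ.card + r ≤ G.minDegree + 2) :
    G.IsClique ((Aᶜ : Finset V) : Set V) := by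
  intro b hb b' hb' hne
  have hb : b ∉ A := mem_compl.1 (mem_coe.1 hb)
  have hfull : Aᶜ.filter (fun u => G.Adj b u) = Aᶜ.erase b := by
    refine eq_of_subset_of_card_le filter_adj_subset_erase ?_
    have := hA.nbrsIn_lt hb
    have := nbrsIn_add_nbrsIn_compl (G := G) (A := A) (v := b)
    have := G.minDegree_le_degree b
    rw [card_erase_of_mem (mem_compl.2 hb)]
    change _ ≤ nbrsIn G Aᶜ b
    omega
  have : b' ∈ Aᶜ.filter (fun u => G.Adj b u) := hfull ▸ mem_erase.2 ⟨hne.symm, mem_coe.1 hb'⟩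
  exact (mem_filter.1 this).2

end BootClosed

end

section

variable [Fintype V] {G : SimpleGraph V} {A : Finset V}

lemma exists_one_lt_nbrsIn_compl (hcard : A.card = Aᶜ.card + 1) (hδ : A.card ≤ G.minDegree)
    (h2 : 2 ≤ Aᶜ.card) : ∃ a ∈ A, 1 < nbrsIn G Aᶜ a := by
  have hAc : ∀ b ∈ Aᶜ, 2 ≤ nbrsIn G A b := fun b hb => by
    have := le_nbrsIn_add_one (G := G) (r := 3) (by omega) (mem_compl.1 hb)
    omega
  apply exists_lt_of_sum_lt
  calc ∑ _ ∈ A, 1 = A.card := by simp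
    _ < Aᶜ.card * 2 := by omega
    _ = ∑ _ ∈ Aᶜ, 2 := by simp
    _ ≤ ∑ b ∈ Aᶜ, nbrsIn G A b := sum_le_sum hAc
    _ = ∑ a ∈ A, nbrsIn G Aᶜ a := (sum_nbrsIn_comm _ _).symm

lemma exists_adj_adj_of_card_compl (hcard : A.card = Aᶜ.card + 1) (hδ : A.card ≤ G.minDegree)
    (h2 : 2 ≤ Aᶜ.card) :
    ∃ a₂ ∈ A, 1 < nbrsIn G Aᶜ a₂ ∧ ∃ a₁ ∈ A, G.Adj a₂ a₁ ∧ ∃ b ∈ Aᶜ, G.Adj a₁ b := by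
  obtain ⟨a₂, ha₂, hnbr⟩ := exists_one_lt_nbrsIn_compl hcard hδ h2
  obtain ⟨a₁, ha₁, h₂₁⟩ := exists_adj_mem (G := G) (A := A) (v := a₂) (by
    have := card_le_card (erase_subset a₂ Aᶜ)
    have := G.minDegree_le_degree a₂
    omega)
  obtain ⟨b, hb, h₁b⟩ := exists_adj_mem (G := G) (A := Aᶜ) (v := a₁) (by
    have := G.minDegree_le_degree a₁
    rw [compl_compl, card_erase_of_mem ha₁]
    omega)
  exact ⟨a₂, ha₂, hnbr, a₁, ha₁, h₂₁, b, hb, h₁b⟩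

lemma exists_card_eq_three_bootClosure_eq_univ (hA : BootClosed G 3 A)
    (hcard : A.card = Aᶜ.card + 1) (hδ : A.card ≤ G.minDegree) (h3 : 3 ≤ Aᶜ.card) :
    ∃ S : Finset V, S.card = 3 ∧ bootClosure G 3 S = univ := by
  have hK := hA.isClique_compl (by omega)
  obtain ⟨a₂, ha₂, hnbr, a₁, ha₁, h₂₁, b₃, hb₃, h₁₃⟩ :=
    exists_adj_adj_of_card_compl hcard hδ (by omega)
  obtain ⟨T, hT, hTcard⟩ := exists_subset_card_eq (s := Aᶜ.erase b₃) (n := 2)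
    (by rw [card_erase_of_mem hb₃]; omega)
  have ha₁T : a₁ ∉ T := fun h => mem_compl.1 (mem_of_mem_erase (hT h)) ha₁
  refine ⟨insert a₁ T, by rw [card_insert_of_notMem ha₁T, hTcard], ?_⟩
  set C := bootClosure G 3 (insert a₁ T)
  have hC : BootClosed G 3 C := bootClosed_bootClosure
  have hSC : insert a₁ T ⊆ C := subset_bootClosure_s11
  have ha₁C : a₁ ∈ C := hSC (mem_insert_self _ _)
  have hAcC : Aᶜ ⊆ C := by
    refine hC.subset_of_isClique_of_adj hK hb₃ ha₁C (not_not.2 ha₁ ∘ mem_compl.1) h₁₃.symm ?_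
    have : T ⊆ (Aᶜ ∩ C).erase b₃ := fun u hu =>
      mem_erase.2 ⟨ne_of_mem_erase (hT hu),
        mem_inter.2 ⟨mem_of_mem_erase (hT hu), hSC (mem_insert_of_mem hu)⟩⟩
    have := card_le_card this
    omega
  have ha₂C : a₂ ∈ C := by
    have ha₁N : a₁ ∉ Aᶜ.filter (fun u => G.Adj a₂ u) := fun h =>
      mem_compl.1 (mem_filter.1 h).1 ha₁
    refine hC.mem_of_le_card (insert_subset ha₁C ((filter_subset _ _).trans hAcC)) ?_
      (by rw [card_insert_of_notMem ha₁N]; exact Nat.succ_le_succ hnbr)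
    intro u hu
    rcases mem_insert.1 hu with rfl | hu
    · exact h₂₁
    · exact (mem_filter.1 hu).2
  refine hC.eq_univ_of_card_compl ?_
  have hsub : Cᶜ ⊆ (A.erase a₁).erase a₂ := fun x hx => by
    have hx := mem_compl.1 hx
    have hxA : x ∈ A := by_contra fun h => hx (hAcC (mem_compl.2 h))
    exact mem_erase.2 ⟨fun e => hx (e ▸ ha₂C), mem_erase.2 ⟨fun e => hx (e ▸ ha₁C), hxA⟩⟩
  have := card_le_card hsub
  rw [card_erase_of_mem (mem_erase.2 ⟨G.ne_of_adj h₂₁, ha₂⟩), card_erase_of_mem ha₁] at this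
  omega

end

theorem stmt_11 {V : Type*} [Fintype V] (G : SimpleGraph V) (n : ℕ)
    (hn : Fintype.card V = n) (h13 : 13 ≤ n) (hodd : Odd n)
    (hδ : (n + 1) / 2 ≤ G.minDegree)
    (A : Finset V) (hcard : A.card = (n + 1) / 2) (hclosed : bootClosure G 3 A = A) :
    minPerc G 3 = 3 := by
  obtain ⟨m, rfl⟩ := hodd
  have hAc : Aᶜ.card = m := by rw [card_compl, hn, hcard]; omega
  obtain ⟨S, hS, hSuniv⟩ := exists_card_eq_three_bootClosure_eq_univ
    (bootClosed_iff_bootClosure_eq.2 hclosed) (by omega) (by omega) (by omega)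
  exact le_antisymm ((minPerc_le_card hSuniv).trans_eq hS) (le_minPerc (by omega))
end
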